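/- arXiv:2212.09716 — 3 statements merged into one kernel-verified Lean document; each statement's English description precedes it below -/
import Mathlib

section
/- For every t, the point e(t) = ξ(t) + r(t)·n(t) + (r'(t)/τ(t))·b(t) is the unique point P ∈ ℝ³ satisfying the three equations ξ'(t)·(P − ξ(t)) = 0, ξ''(t)·(P − ξ(t)) = 1, and ξ'''(t)·(P − ξ(t)) = 0 (dot denoting the Euclidean inner product). -/
open scoped RealInnerProductSpace

noncomputable section

/-- The determinant of the 3×3 matrix with rows `u`, `v`, `w`. -/
def det3 (u v w : EuclideanSpace ℝ (Fin 3)) : ℝ :=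
  u 0 * (v 1 * w 2 - v 2 * w 1) - u 1 * (v 0 * w 2 - v 2 * w 0)
    + u 2 * (v 0 * w 1 - v 1 * w 0)

/-- The cross product of two vectors in `ℝ³`. -/
def cross3 (u v : EuclideanSpace ℝ (Fin 3)) : EuclideanSpace ℝ (Fin 3) :=
  (WithLp.equiv 2 (Fin 3 → ℝ)).symm
    ![u 1 * v 2 - u 2 * v 1, u 2 * v 0 - u 0 * v 2, u 0 * v 1 - u 1 * v 0]

lemma inner3 (u v : EuclideanSpace ℝ (Fin 3)) :
    ⟪u, v⟫ = u 0 * v 0 + u 1 * v 1 + u 2 * v 2 := by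
  simp [PiLp.inner_apply, Fin.sum_univ_three, RCLike.inner_apply, mul_comm]

lemma inner_cross3 (u v w : EuclideanSpace ℝ (Fin 3)) :
    ⟪u, cross3 v w⟫ = det3 u v w := by
  simp [inner3, cross3, det3, PiLp.toLp_apply, Fin.sum_univ_three]
  ring

lemma cross3_smul_right (c : ℝ) (u v : EuclideanSpace ℝ (Fin 3)) :
    cross3 u (c • v) = c • cross3 u v := by
  ext i
  fin_cases i <;>
    simp [cross3, PiLp.toLp_apply, PiLp.smul_apply, smul_eq_mul] <;> ring

lemma det3_row12 (u w : EuclideanSpace ℝ (Fin 3)) : det3 u u w = 0 := by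
  simp [det3]; ring

lemma det3_row13 (u v : EuclideanSpace ℝ (Fin 3)) : det3 u v u = 0 := by
  simp [det3]; ring

lemma det3_rot (u v w : EuclideanSpace ℝ (Fin 3)) : det3 w u v = det3 u v w := by
  simp [det3]; ring

theorem stmt_0
    (ξ : ℝ → EuclideanSpace ℝ (Fin 3))
    (hξ : ContDiff ℝ (⊤ : ℕ∞) ξ)
    (hunit : ∀ t, ‖deriv ξ t‖ = 1)
    (k τ r : ℝ → ℝ) (N B : ℝ → EuclideanSpace ℝ (Fin 3))
    (hk : ∀ t, k t = ‖deriv (deriv ξ) t‖)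
    (hkpos : ∀ t, 0 < k t)
    (hN : ∀ t, N t = (k t)⁻¹ • deriv (deriv ξ) t)
    (hB : ∀ t, B t = cross3 (deriv ξ t) (N t))
    (hτ : ∀ t, τ t = det3 (deriv ξ t) (deriv (deriv ξ) t) (deriv (deriv (deriv ξ)) t) / (k t) ^ 2)
    (hτne : ∀ t, τ t ≠ 0)
    (hr : ∀ t, r t = (k t)⁻¹)
    (e : ℝ → EuclideanSpace ℝ (Fin 3))
    (he : ∀ t, e t = ξ t + r t • N t + (deriv r t / τ t) • B t)
    (t : ℝ) :
    ∀ P : EuclideanSpace ℝ (Fin 3),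
      (⟪deriv ξ t, P - ξ t⟫ = 0 ∧ ⟪deriv (deriv ξ) t, P - ξ t⟫ = 1 ∧
        ⟪deriv (deriv (deriv ξ)) t, P - ξ t⟫ = 0) ↔ P = e t := by
  intro P
  have hκ := hkpos t
  have hκne : k t ≠ 0 := ne_of_gt hκ
  open scoped ContDiff in
  have hsm : ContDiff ℝ ∞ ξ := hξ.of_le (by simp)
  obtain ⟨hd0, hc1⟩ := contDiff_infty_iff_deriv.mp hsm
  obtain ⟨hd1, hc2⟩ := contDiff_infty_iff_deriv.mp hc1
  obtain ⟨hd2, -⟩ := contDiff_infty_iff_deriv.mp hc2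
  set T := deriv ξ t with hTdef
  set A := deriv (deriv ξ) t with hAdef
  set C := deriv (deriv (deriv ξ)) t with hCdef
  -- basic scalar identities
  have hTT : ⟪T, T⟫ = 1 := by
    rw [real_inner_self_eq_norm_mul_norm, hunit, mul_one]
  have hTA : ⟪T, A⟫ = 0 := by
    have hconst : (fun s => ⟪deriv ξ s, deriv ξ s⟫) = fun _ => (1 : ℝ) := by
      funext s; rw [real_inner_self_eq_norm_mul_norm, hunit, mul_one]
    have h1 : HasDerivAt (fun s => ⟪deriv ξ s, deriv ξ s⟫) (⟪T, A⟫ + ⟪A, T⟫) t :=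
      HasDerivAt.inner ℝ (hd1 t).hasDerivAt (hd1 t).hasDerivAt
    have h2 := h1.deriv
    rw [hconst] at h2
    simp only [deriv_const'] at h2
    linarith [h2, real_inner_comm T A, real_inner_comm A T]
  have hAA : ⟪A, A⟫ = k t ^ 2 := by
    rw [hk, ← real_inner_self_eq_norm_sq]
  -- derivative of r
  have hg : HasDerivAt (fun s => ⟪deriv (deriv ξ) s, deriv (deriv ξ) s⟫)
      (2 * ⟪C, A⟫) t := by
    have h1 : HasDerivAt (fun s => ⟪deriv (deriv ξ) s, deriv (deriv ξ) s⟫)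
        (⟪A, C⟫ + ⟪C, A⟫) t :=
      HasDerivAt.inner ℝ (hd2 t).hasDerivAt (hd2 t).hasDerivAt
    convert h1 using 1
    rw [real_inner_comm A C]; ring
  have hrfun : r = fun s => (Real.sqrt ⟪deriv (deriv ξ) s, deriv (deriv ξ) s⟫)⁻¹ := by
    funext s
    rw [hr, hk, real_inner_self_eq_norm_sq, Real.sqrt_sq (norm_nonneg _)]
  have hgne : ⟪A, A⟫ ≠ 0 := by rw [hAA]; positivity
  have hsqrt : Real.sqrt ⟪A, A⟫ = k t := by rw [hAA, Real.sqrt_sq hκ.le]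
  have hds : HasDerivAt (fun s => Real.sqrt ⟪deriv (deriv ξ) s, deriv (deriv ξ) s⟫)
      (1 / (2 * Real.sqrt ⟪A, A⟫) * (2 * ⟪C, A⟫)) t :=
    (Real.hasDerivAt_sqrt hgne).comp t hg
  have hdr : HasDerivAt r (-(1 / (2 * k t) * (2 * ⟪C, A⟫)) / (k t) ^ 2) t := by
    rw [hrfun]
    have h2 := hds.inv (by rw [hsqrt]; exact hκne)
    rw [hsqrt] at h2
    exact h2
  have hderivr : deriv r t = -⟪C, A⟫ / (k t) ^ 3 := by
    rw [hdr.deriv]; field_simp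
  -- determinant facts
  have hdet : det3 T A C = τ t * (k t) ^ 2 := by
    rw [hτ]; field_simp; rfl
  have hdetne : det3 T A C ≠ 0 := by
    rw [hdet]; exact mul_ne_zero (hτne t) (pow_ne_zero _ hκne)
  -- inner products with N and B
  have hNin : ∀ u : EuclideanSpace ℝ (Fin 3), ⟪u, N t⟫ = (k t)⁻¹ * ⟪u, A⟫ := fun u => by
    rw [hN, real_inner_smul_right]
  have hBin : ∀ u : EuclideanSpace ℝ (Fin 3), ⟪u, B t⟫ = (k t)⁻¹ * det3 u T A := fun u => by
    rw [hB, hN, cross3_smul_right, real_inner_smul_right, inner_cross3]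
  have hE : e t - ξ t = r t • N t + (deriv r t / τ t) • B t := by
    rw [he]; abel
  -- e t satisfies the three equations
  have heT : ⟪T, e t - ξ t⟫ = 0 := by
    rw [hE, inner_add_right, real_inner_smul_right, real_inner_smul_right, hNin, hBin,
      hTA, det3_row12]
    ring
  have heA : ⟪A, e t - ξ t⟫ = 1 := by
    rw [hE, inner_add_right, real_inner_smul_right, real_inner_smul_right, hNin, hBin,
      hAA, det3_row13, hr]
    field_simp
    ring
  have heC : ⟪C, e t - ξ t⟫ = 0 := by
    rw [hE, inner_add_right, real_inner_smul_right, real_inner_smul_right, hNin, hBin,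
      det3_rot, hdet, hr, hderivr]
    field_simp [hτne t]
    ring
  constructor
  · rintro ⟨h1, h2, h3⟩
    have e1 : ⟪T, P - e t⟫ = 0 := by
      have hsplit : P - e t = (P - ξ t) - (e t - ξ t) := by abel
      rw [hsplit, inner_sub_right, h1, heT, sub_zero]
    have e2 : ⟪A, P - e t⟫ = 0 := by
      have hsplit : P - e t = (P - ξ t) - (e t - ξ t) := by abel
      rw [hsplit, inner_sub_right, h2, heA, sub_self]
    have e3 : ⟪C, P - e t⟫ = 0 := by
      have hsplit : P - e t = (P - ξ t) - (e t - ξ t) := by abel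
      rw [hsplit, inner_sub_right, h3, heC, sub_zero]
    rw [inner3] at e1 e2 e3
    have z0 : (P - e t) 0 = 0 := by
      have hh : det3 T A C * (P - e t) 0 = 0 := by
        simp only [det3]
        linear_combination (A 1 * C 2 - A 2 * C 1) * e1 - (T 1 * C 2 - T 2 * C 1) * e2 +
          (T 1 * A 2 - T 2 * A 1) * e3
      exact (mul_eq_zero.mp hh).resolve_left hdetne
    have z1 : (P - e t) 1 = 0 := by
      have hh : det3 T A C * (P - e t) 1 = 0 := by
        simp only [det3]
        linear_combination (-(A 0 * C 2 - A 2 * C 0)) * e1 + (T 0 * C 2 - T 2 * C 0) * e2 -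
          (T 0 * A 2 - T 2 * A 0) * e3
      exact (mul_eq_zero.mp hh).resolve_left hdetne
    have z2 : (P - e t) 2 = 0 := by
      have hh : det3 T A C * (P - e t) 2 = 0 := by
        simp only [det3]
        linear_combination (A 0 * C 1 - A 1 * C 0) * e1 - (T 0 * C 1 - T 1 * C 0) * e2 +
          (T 0 * A 1 - T 1 * A 0) * e3
      exact (mul_eq_zero.mp hh).resolve_left hdetne
    have hz : P - e t = 0 := by
      ext i
      fin_cases i
      · simpa using z0
      · simpa using z1
      · simpa using z2
    exact sub_eq_zero.mp hz
  · rintro rfl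
    exact ⟨heT, heA, heC⟩
end
end

section
/- If σ(t) = 0 for all t in an interval I, then the evolute e is constant on I and the function R = ‖e − ξ‖ is constant on I; hence ξ restricted to I lies on a sphere (the curve is spherical) with center the constant value of e and radius the constant value of R. -/
open scoped RealInnerProductSpace

noncomputable section

lemma ext3 {u v : EuclideanSpace ℝ (Fin 3)} (h : ∀ i, u i = v i) : u = v := PiLp.ext h

lemma cross3_apply0 (u v : EuclideanSpace ℝ (Fin 3)) : cross3 u v 0 = u 1 * v 2 - u 2 * v 1 := by simp [cross3]
lemma cross3_apply1 (u v : EuclideanSpace ℝ (Fin 3)) : cross3 u v 1 = u 2 * v 0 - u 0 * v 2 := by simp [cross3]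
lemma cross3_apply2 (u v : EuclideanSpace ℝ (Fin 3)) : cross3 u v 2 = u 0 * v 1 - u 1 * v 0 := by simp [cross3]

lemma det3_eq_inner (u v w : EuclideanSpace ℝ (Fin 3)) : det3 u v w = ⟪w, cross3 u v⟫ := by
  rw [inner3, det3, cross3_apply0, cross3_apply1, cross3_apply2]; ring

lemma inner_cross3_left (u v : EuclideanSpace ℝ (Fin 3)) : ⟪u, cross3 u v⟫ = 0 := by
  rw [inner3, cross3_apply0, cross3_apply1, cross3_apply2]; ring

lemma decomp3 (T N v : EuclideanSpace ℝ (Fin 3)) (h1 : ⟪T,T⟫ = 1) (h2 : ⟪N,N⟫ = 1)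
    (h3 : ⟪T,N⟫ = 0) :
    v = ⟪v,T⟫ • T + ⟪v,N⟫ • N + ⟪v, cross3 T N⟫ • cross3 T N := by
  set b := cross3 T N with hb
  rw [inner3] at h1 h2 h3
  have hb0 : b 0 = T 1 * N 2 - T 2 * N 1 := cross3_apply0 T N
  have hb1 : b 1 = T 2 * N 0 - T 0 * N 2 := cross3_apply1 T N
  have hb2 : b 2 = T 0 * N 1 - T 1 * N 0 := cross3_apply2 T N
  set M : Matrix (Fin 3) (Fin 3) ℝ :=
    Matrix.of ![![T 0, T 1, T 2], ![N 0, N 1, N 2], ![b 0, b 1, b 2]] with hMdef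
  have hent : ∀ i j : Fin 3, (M * M.transpose) i j
      = ![T, N, b] i 0 * ![T, N, b] j 0 + ![T, N, b] i 1 * ![T, N, b] j 1
        + ![T, N, b] i 2 * ![T, N, b] j 2 := by
    intro i j
    simp only [Matrix.mul_apply, Matrix.transpose_apply, Fin.sum_univ_three]
    fin_cases i <;> fin_cases j <;> simp [hMdef]
  have g00 : (M * M.transpose) 0 0 = (1 : Matrix (Fin 3) (Fin 3) ℝ) 0 0 := by
    rw [hent 0 0]
    simp [Matrix.one_apply, hb0, hb1, hb2]
    all_goals first
      | ring1
      | linear_combination h1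
      | linear_combination h2
      | linear_combination h3
      | linear_combination -h3
      | linear_combination h3 - h1
      | linear_combination h3 - h2
      | linear_combination h1 - h3
      | linear_combination h2 - h3
      | linear_combination (N 0 * N 0 + N 1 * N 1 + N 2 * N 2) * h1 + h2 - (T 0 * N 0 + T 1 * N 1 + T 2 * N 2) * h3
      | linear_combination (-(N 0 * N 0 + N 1 * N 1 + N 2 * N 2)) * h1 - h2 + (T 0 * N 0 + T 1 * N 1 + T 2 * N 2) * h3
      | linear_combination (T 0 * T 0 + T 1 * T 1 + T 2 * T 2) * h2 + h1 - (T 0 * N 0 + T 1 * N 1 + T 2 * N 2) * h3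
      | linear_combination (-(T 0 * T 0 + T 1 * T 1 + T 2 * T 2)) * h2 - h1 + (T 0 * N 0 + T 1 * N 1 + T 2 * N 2) * h3
  have g01 : (M * M.transpose) 0 1 = (1 : Matrix (Fin 3) (Fin 3) ℝ) 0 1 := by
    rw [hent 0 1]
    simp [Matrix.one_apply, hb0, hb1, hb2]
    all_goals first
      | ring1
      | linear_combination h1
      | linear_combination h2
      | linear_combination h3
      | linear_combination -h3
      | linear_combination h3 - h1
      | linear_combination h3 - h2
      | linear_combination h1 - h3
      | linear_combination h2 - h3
      | linear_combination (N 0 * N 0 + N 1 * N 1 + N 2 * N 2) * h1 + h2 - (T 0 * N 0 + T 1 * N 1 + T 2 * N 2) * h3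
      | linear_combination (-(N 0 * N 0 + N 1 * N 1 + N 2 * N 2)) * h1 - h2 + (T 0 * N 0 + T 1 * N 1 + T 2 * N 2) * h3
      | linear_combination (T 0 * T 0 + T 1 * T 1 + T 2 * T 2) * h2 + h1 - (T 0 * N 0 + T 1 * N 1 + T 2 * N 2) * h3
      | linear_combination (-(T 0 * T 0 + T 1 * T 1 + T 2 * T 2)) * h2 - h1 + (T 0 * N 0 + T 1 * N 1 + T 2 * N 2) * h3
  have g02 : (M * M.transpose) 0 2 = (1 : Matrix (Fin 3) (Fin 3) ℝ) 0 2 := by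
    rw [hent 0 2]
    simp [Matrix.one_apply, hb0, hb1, hb2]
    all_goals first
      | ring1
      | linear_combination h1
      | linear_combination h2
      | linear_combination h3
      | linear_combination -h3
      | linear_combination h3 - h1
      | linear_combination h3 - h2
      | linear_combination h1 - h3
      | linear_combination h2 - h3
      | linear_combination (N 0 * N 0 + N 1 * N 1 + N 2 * N 2) * h1 + h2 - (T 0 * N 0 + T 1 * N 1 + T 2 * N 2) * h3
      | linear_combination (-(N 0 * N 0 + N 1 * N 1 + N 2 * N 2)) * h1 - h2 + (T 0 * N 0 + T 1 * N 1 + T 2 * N 2) * h3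
      | linear_combination (T 0 * T 0 + T 1 * T 1 + T 2 * T 2) * h2 + h1 - (T 0 * N 0 + T 1 * N 1 + T 2 * N 2) * h3
      | linear_combination (-(T 0 * T 0 + T 1 * T 1 + T 2 * T 2)) * h2 - h1 + (T 0 * N 0 + T 1 * N 1 + T 2 * N 2) * h3
  have g10 : (M * M.transpose) 1 0 = (1 : Matrix (Fin 3) (Fin 3) ℝ) 1 0 := by
    rw [hent 1 0]
    simp [Matrix.one_apply, hb0, hb1, hb2]
    all_goals first
      | ring1
      | linear_combination h1
      | linear_combination h2
      | linear_combination h3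
      | linear_combination -h3
      | linear_combination h3 - h1
      | linear_combination h3 - h2
      | linear_combination h1 - h3
      | linear_combination h2 - h3
      | linear_combination (N 0 * N 0 + N 1 * N 1 + N 2 * N 2) * h1 + h2 - (T 0 * N 0 + T 1 * N 1 + T 2 * N 2) * h3
      | linear_combination (-(N 0 * N 0 + N 1 * N 1 + N 2 * N 2)) * h1 - h2 + (T 0 * N 0 + T 1 * N 1 + T 2 * N 2) * h3
      | linear_combination (T 0 * T 0 + T 1 * T 1 + T 2 * T 2) * h2 + h1 - (T 0 * N 0 + T 1 * N 1 + T 2 * N 2) * h3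
      | linear_combination (-(T 0 * T 0 + T 1 * T 1 + T 2 * T 2)) * h2 - h1 + (T 0 * N 0 + T 1 * N 1 + T 2 * N 2) * h3
  have g11 : (M * M.transpose) 1 1 = (1 : Matrix (Fin 3) (Fin 3) ℝ) 1 1 := by
    rw [hent 1 1]
    simp [Matrix.one_apply, hb0, hb1, hb2]
    all_goals first
      | ring1
      | linear_combination h1
      | linear_combination h2
      | linear_combination h3
      | linear_combination -h3
      | linear_combination h3 - h1
      | linear_combination h3 - h2
      | linear_combination h1 - h3
      | linear_combination h2 - h3
      | linear_combination (N 0 * N 0 + N 1 * N 1 + N 2 * N 2) * h1 + h2 - (T 0 * N 0 + T 1 * N 1 + T 2 * N 2) * h3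
      | linear_combination (-(N 0 * N 0 + N 1 * N 1 + N 2 * N 2)) * h1 - h2 + (T 0 * N 0 + T 1 * N 1 + T 2 * N 2) * h3
      | linear_combination (T 0 * T 0 + T 1 * T 1 + T 2 * T 2) * h2 + h1 - (T 0 * N 0 + T 1 * N 1 + T 2 * N 2) * h3
      | linear_combination (-(T 0 * T 0 + T 1 * T 1 + T 2 * T 2)) * h2 - h1 + (T 0 * N 0 + T 1 * N 1 + T 2 * N 2) * h3
  have g12 : (M * M.transpose) 1 2 = (1 : Matrix (Fin 3) (Fin 3) ℝ) 1 2 := by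
    rw [hent 1 2]
    simp [Matrix.one_apply, hb0, hb1, hb2]
    all_goals first
      | ring1
      | linear_combination h1
      | linear_combination h2
      | linear_combination h3
      | linear_combination -h3
      | linear_combination h3 - h1
      | linear_combination h3 - h2
      | linear_combination h1 - h3
      | linear_combination h2 - h3
      | linear_combination (N 0 * N 0 + N 1 * N 1 + N 2 * N 2) * h1 + h2 - (T 0 * N 0 + T 1 * N 1 + T 2 * N 2) * h3
      | linear_combination (-(N 0 * N 0 + N 1 * N 1 + N 2 * N 2)) * h1 - h2 + (T 0 * N 0 + T 1 * N 1 + T 2 * N 2) * h3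
      | linear_combination (T 0 * T 0 + T 1 * T 1 + T 2 * T 2) * h2 + h1 - (T 0 * N 0 + T 1 * N 1 + T 2 * N 2) * h3
      | linear_combination (-(T 0 * T 0 + T 1 * T 1 + T 2 * T 2)) * h2 - h1 + (T 0 * N 0 + T 1 * N 1 + T 2 * N 2) * h3
  have g20 : (M * M.transpose) 2 0 = (1 : Matrix (Fin 3) (Fin 3) ℝ) 2 0 := by
    rw [hent 2 0]
    simp [Matrix.one_apply, hb0, hb1, hb2]
    all_goals first
      | ring1
      | linear_combination h1
      | linear_combination h2
      | linear_combination h3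
      | linear_combination -h3
      | linear_combination h3 - h1
      | linear_combination h3 - h2
      | linear_combination h1 - h3
      | linear_combination h2 - h3
      | linear_combination (N 0 * N 0 + N 1 * N 1 + N 2 * N 2) * h1 + h2 - (T 0 * N 0 + T 1 * N 1 + T 2 * N 2) * h3
      | linear_combination (-(N 0 * N 0 + N 1 * N 1 + N 2 * N 2)) * h1 - h2 + (T 0 * N 0 + T 1 * N 1 + T 2 * N 2) * h3
      | linear_combination (T 0 * T 0 + T 1 * T 1 + T 2 * T 2) * h2 + h1 - (T 0 * N 0 + T 1 * N 1 + T 2 * N 2) * h3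
      | linear_combination (-(T 0 * T 0 + T 1 * T 1 + T 2 * T 2)) * h2 - h1 + (T 0 * N 0 + T 1 * N 1 + T 2 * N 2) * h3
  have g21 : (M * M.transpose) 2 1 = (1 : Matrix (Fin 3) (Fin 3) ℝ) 2 1 := by
    rw [hent 2 1]
    simp [Matrix.one_apply, hb0, hb1, hb2]
    all_goals first
      | ring1
      | linear_combination h1
      | linear_combination h2
      | linear_combination h3
      | linear_combination -h3
      | linear_combination h3 - h1
      | linear_combination h3 - h2
      | linear_combination h1 - h3
      | linear_combination h2 - h3
      | linear_combination (N 0 * N 0 + N 1 * N 1 + N 2 * N 2) * h1 + h2 - (T 0 * N 0 + T 1 * N 1 + T 2 * N 2) * h3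
      | linear_combination (-(N 0 * N 0 + N 1 * N 1 + N 2 * N 2)) * h1 - h2 + (T 0 * N 0 + T 1 * N 1 + T 2 * N 2) * h3
      | linear_combination (T 0 * T 0 + T 1 * T 1 + T 2 * T 2) * h2 + h1 - (T 0 * N 0 + T 1 * N 1 + T 2 * N 2) * h3
      | linear_combination (-(T 0 * T 0 + T 1 * T 1 + T 2 * T 2)) * h2 - h1 + (T 0 * N 0 + T 1 * N 1 + T 2 * N 2) * h3
  have g22 : (M * M.transpose) 2 2 = (1 : Matrix (Fin 3) (Fin 3) ℝ) 2 2 := by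
    rw [hent 2 2]
    simp [Matrix.one_apply, hb0, hb1, hb2]
    all_goals first
      | ring1
      | linear_combination h1
      | linear_combination h2
      | linear_combination h3
      | linear_combination -h3
      | linear_combination h3 - h1
      | linear_combination h3 - h2
      | linear_combination h1 - h3
      | linear_combination h2 - h3
      | linear_combination (N 0 * N 0 + N 1 * N 1 + N 2 * N 2) * h1 + h2 - (T 0 * N 0 + T 1 * N 1 + T 2 * N 2) * h3
      | linear_combination (-(N 0 * N 0 + N 1 * N 1 + N 2 * N 2)) * h1 - h2 + (T 0 * N 0 + T 1 * N 1 + T 2 * N 2) * h3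
      | linear_combination (T 0 * T 0 + T 1 * T 1 + T 2 * T 2) * h2 + h1 - (T 0 * N 0 + T 1 * N 1 + T 2 * N 2) * h3
      | linear_combination (-(T 0 * T 0 + T 1 * T 1 + T 2 * T 2)) * h2 - h1 + (T 0 * N 0 + T 1 * N 1 + T 2 * N 2) * h3
  have hM : M * M.transpose = 1 := by
    ext i j
    fin_cases i <;> fin_cases j
    · exact g00
    · exact g01
    · exact g02
    · exact g10
    · exact g11
    · exact g12
    · exact g20
    · exact g21
    · exact g22
  have hM2 : M.transpose * M = 1 := mul_eq_one_comm.mp hM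
  have key : ∀ i j : Fin 3, T i * T j + N i * N j + b i * b j
      = (1 : Matrix (Fin 3) (Fin 3) ℝ) i j := by
    intro i j
    have h := congrFun (congrFun hM2 i) j
    simp only [Matrix.mul_apply, Matrix.transpose_apply, Fin.sum_univ_three] at h
    fin_cases i <;> fin_cases j <;> simp only [hMdef] at h <;> simpa using h
  have k00 := key 0 0; have k10 := key 1 0; have k20 := key 2 0
  have k01 := key 0 1; have k11 := key 1 1; have k21 := key 2 1
  have k02 := key 0 2; have k12 := key 1 2; have k22 := key 2 2
  simp [Matrix.one_apply] at k00 k10 k20 k01 k11 k21 k02 k12 k22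
  apply ext3
  intro i
  rw [inner3, inner3, inner3]
  fin_cases i <;>
    simp [PiLp.add_apply, PiLp.smul_apply, smul_eq_mul]
  · linear_combination (-(v 0)) * k00 - v 1 * k10 - v 2 * k20
  · linear_combination (-(v 1)) * k11 - v 0 * k01 - v 2 * k21
  · linear_combination (-(v 2)) * k22 - v 0 * k02 - v 1 * k12

lemma hasDerivAt_euclidean (g : ℝ → EuclideanSpace ℝ (Fin 3)) (v : EuclideanSpace ℝ (Fin 3)) (t : ℝ) :
    HasDerivAt g v t ↔ ∀ i, HasDerivAt (fun s => g s i) (v i) t := by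
  constructor
  · intro h i
    have h2 := ((PiLp.continuousLinearEquiv 2 ℝ (fun _ : Fin 3 => ℝ)).toContinuousLinearMap.hasFDerivAt).comp_hasDerivAt t h
    exact hasDerivAt_pi.mp h2 i
  · intro h
    have h2 : HasDerivAt (fun s i => g s i) (fun i => v i) t := hasDerivAt_pi.mpr h
    exact ((PiLp.continuousLinearEquiv 2 ℝ (fun _ : Fin 3 => ℝ)).symm.toContinuousLinearMap.hasFDerivAt).comp_hasDerivAt t h2

lemma hasDerivAt_cross3 {f g : ℝ → EuclideanSpace ℝ (Fin 3)} {f' g' : EuclideanSpace ℝ (Fin 3)} {t : ℝ}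
    (hf : HasDerivAt f f' t) (hg : HasDerivAt g g' t) :
    HasDerivAt (fun s => cross3 (f s) (g s)) (cross3 f' (g t) + cross3 (f t) g') t := by
  rw [hasDerivAt_euclidean] at hf hg ⊢
  intro i
  fin_cases i
  · have h := ((hf 1).mul (hg 2)).sub ((hf 2).mul (hg 1))
    simp only [cross3_apply0]
    refine h.congr_deriv ?_
    simp [cross3_apply0, PiLp.add_apply]
    ring
  · have h := ((hf 2).mul (hg 0)).sub ((hf 0).mul (hg 2))
    simp only [cross3_apply1]
    refine h.congr_deriv ?_
    simp [cross3_apply1, PiLp.add_apply]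
    ring
  · have h := ((hf 0).mul (hg 1)).sub ((hf 1).mul (hg 0))
    simp only [cross3_apply2]
    refine h.congr_deriv ?_
    simp [cross3_apply2, PiLp.add_apply]
    ring

lemma contDiff_apply3 {n : WithTop ℕ∞} {f : ℝ → EuclideanSpace ℝ (Fin 3)} (hf : ContDiff ℝ n f) (i : Fin 3) :
    ContDiff ℝ n fun t => f t i := by
  have h1 := (PiLp.continuousLinearEquiv 2 ℝ (fun _ : Fin 3 => ℝ)).toContinuousLinearMap.contDiff.comp hf
  exact contDiff_pi.mp h1 i

set_option maxHeartbeats 1000000 in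
theorem stmt_4
    (ξ : ℝ → EuclideanSpace ℝ (Fin 3))
    (hξ : ContDiff ℝ (⊤ : ℕ∞) ξ)
    (hunit : ∀ t, ‖deriv ξ t‖ = 1)
    (k τ r : ℝ → ℝ) (N B : ℝ → EuclideanSpace ℝ (Fin 3))
    (hk : ∀ t, k t = ‖deriv (deriv ξ) t‖)
    (hkpos : ∀ t, 0 < k t)
    (hN : ∀ t, N t = (k t)⁻¹ • deriv (deriv ξ) t)
    (hB : ∀ t, B t = cross3 (deriv ξ t) (N t))
    (hτ : ∀ t, τ t = det3 (deriv ξ t) (deriv (deriv ξ) t) (deriv (deriv (deriv ξ)) t) / (k t) ^ 2)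
    (hτne : ∀ t, τ t ≠ 0)
    (hr : ∀ t, r t = (k t)⁻¹)
    (e : ℝ → EuclideanSpace ℝ (Fin 3))
    (he : ∀ t, e t = ξ t + r t • N t + (deriv r t / τ t) • B t)
    (R : ℝ → ℝ) (hR : ∀ t, R t = ‖e t - ξ t‖)
    (σ : ℝ → ℝ)
    (hσ : ∀ t, σ t = r t * τ t + deriv (fun s => deriv r s / τ s) t)
    (I : Set ℝ) (hI : I.OrdConnected)
    (hσ0 : ∀ t ∈ I, σ t = 0) :
    ∃ (c : EuclideanSpace ℝ (Fin 3)) (ρ : ℝ),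
      (∀ t ∈ I, e t = c) ∧ (∀ t ∈ I, R t = ρ) ∧ (∀ t ∈ I, ‖ξ t - c‖ = ρ) := by
  -- smoothness of derivatives
  open scoped ContDiff in
  have hξ' : ContDiff ℝ ∞ ξ := hξ.of_le (by simp)
  have hT_sm : ContDiff ℝ ∞ (deriv ξ) := (contDiff_infty_iff_deriv.mp hξ').2
  have hA_sm : ContDiff ℝ ∞ (deriv (deriv ξ)) := (contDiff_infty_iff_deriv.mp hT_sm).2
  have hTd : ∀ t, HasDerivAt ξ (deriv ξ t) t := fun t => (hξ'.differentiable (by simp) t).hasDerivAt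
  have hAd : ∀ t, HasDerivAt (deriv ξ) (deriv (deriv ξ) t) t :=
    fun t => (hT_sm.differentiable (by simp) t).hasDerivAt
  have hJd : ∀ t, HasDerivAt (deriv (deriv ξ)) (deriv (deriv (deriv ξ)) t) t :=
    fun t => (hA_sm.differentiable (by simp) t).hasDerivAt
  have hkne : ∀ t, k t ≠ 0 := fun t => (hkpos t).ne'
  have hAne : ∀ t, deriv (deriv ξ) t ≠ 0 := by
    intro t h
    have := hkpos t
    rw [hk t, h, norm_zero] at this
    exact lt_irrefl 0 this
  have hk_sm : ContDiff ℝ ∞ k := by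
    have hkf : k = fun t => ‖deriv (deriv ξ) t‖ := funext hk
    rw [hkf]
    exact contDiff_iff_contDiffAt.mpr fun t => (hA_sm.contDiffAt).norm ℝ (hAne t)
  have hr_sm : ContDiff ℝ ∞ r := by
    have hrf : r = fun t => (k t)⁻¹ := funext hr
    rw [hrf]; exact hk_sm.inv hkne
  have hr'_sm : ContDiff ℝ ∞ (deriv r) := (contDiff_infty_iff_deriv.mp hr_sm).2
  have hJ_sm : ContDiff ℝ ∞ (deriv (deriv (deriv ξ))) := (contDiff_infty_iff_deriv.mp hA_sm).2
  have hτ_sm : ContDiff ℝ ∞ τ := by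
    have hτf : τ = fun t =>
        det3 (deriv ξ t) (deriv (deriv ξ) t) (deriv (deriv (deriv ξ)) t) / (k t) ^ 2 :=
      funext hτ
    rw [hτf]
    refine ContDiff.div ?_ (hk_sm.pow 2) (fun t => pow_ne_zero 2 (hkne t))
    have cT := fun i => contDiff_apply3 hT_sm i
    have cA := fun i => contDiff_apply3 hA_sm i
    have cJ := fun i => contDiff_apply3 hJ_sm i
    exact (((cT 0).mul (((cA 1).mul (cJ 2)).sub ((cA 2).mul (cJ 1)))).sub
      ((cT 1).mul (((cA 0).mul (cJ 2)).sub ((cA 2).mul (cJ 0))))).add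
      ((cT 2).mul (((cA 0).mul (cJ 1)).sub ((cA 1).mul (cJ 0))))
  have hrd : ∀ t, HasDerivAt r (deriv r t) t := fun t => (hr_sm.differentiable (by simp) t).hasDerivAt
  have hf_sm : ContDiff ℝ ∞ (fun s => deriv r s / τ s) := hr'_sm.div hτ_sm hτne
  have hfd : ∀ t, HasDerivAt (fun s => deriv r s / τ s)
      (deriv (fun s => deriv r s / τ s) t) t :=
    fun t => (hf_sm.differentiable (by simp) t).hasDerivAt
  -- basic inner product identities
  have hTT : ∀ t, ⟪deriv ξ t, deriv ξ t⟫ = 1 := by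
    intro t
    rw [real_inner_self_eq_norm_sq, hunit t]; norm_num
  have hAA : ∀ t, ⟪deriv (deriv ξ) t, deriv (deriv ξ) t⟫ = (k t) ^ 2 := by
    intro t
    rw [real_inner_self_eq_norm_sq, hk t]
  have hAT : ∀ t, ⟪deriv (deriv ξ) t, deriv ξ t⟫ = 0 := by
    intro t
    have h1 : HasDerivAt (fun s => ⟪deriv ξ s, deriv ξ s⟫)
        (⟪deriv ξ t, deriv (deriv ξ) t⟫ + ⟪deriv (deriv ξ) t, deriv ξ t⟫) t :=
      (hAd t).inner ℝ (hAd t)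
    have h2 : (fun s => ⟪deriv ξ s, deriv ξ s⟫) = fun _ => (1 : ℝ) := funext hTT
    rw [h2] at h1
    have h3 := h1.unique (hasDerivAt_const t 1)
    rw [real_inner_comm (deriv ξ t)] at h3
    rw [real_inner_comm]
    linarith
  have hJT : ∀ t, ⟪deriv (deriv (deriv ξ)) t, deriv ξ t⟫ = -(k t) ^ 2 := by
    intro t
    have h1 : HasDerivAt (fun s => ⟪deriv (deriv ξ) s, deriv ξ s⟫)
        (⟪deriv (deriv ξ) t, deriv (deriv ξ) t⟫ + ⟪deriv (deriv (deriv ξ)) t, deriv ξ t⟫) t :=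
      (hJd t).inner ℝ (hAd t)
    have h2 : (fun s => ⟪deriv (deriv ξ) s, deriv ξ s⟫) = fun _ => (0 : ℝ) := funext hAT
    rw [h2] at h1
    have h3 := h1.unique (hasDerivAt_const t 0)
    have h4 := hAA t
    linarith
  -- derivative of k
  have hkd : ∀ t, HasDerivAt k
      (⟪deriv (deriv (deriv ξ)) t, deriv (deriv ξ) t⟫ / k t) t := by
    intro t
    have hq : HasDerivAt (fun s => ⟪deriv (deriv ξ) s, deriv (deriv ξ) s⟫)
        (⟪deriv (deriv ξ) t, deriv (deriv (deriv ξ)) t⟫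
          + ⟪deriv (deriv (deriv ξ)) t, deriv (deriv ξ) t⟫) t :=
      (hJd t).inner ℝ (hJd t)
    have hqne : ⟪deriv (deriv ξ) t, deriv (deriv ξ) t⟫ ≠ 0 := by
      rw [hAA t]; exact pow_ne_zero 2 (hkne t)
    have hkf : k = fun s => Real.sqrt ⟪deriv (deriv ξ) s, deriv (deriv ξ) s⟫ := by
      funext s; rw [hk s, norm_eq_sqrt_real_inner]
    have h := (Real.hasDerivAt_sqrt hqne).comp t hq
    simp only [Function.comp_def] at h
    have hsq : Real.sqrt ⟪deriv (deriv ξ) t, deriv (deriv ξ) t⟫ = k t := by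
      rw [hk t, norm_eq_sqrt_real_inner]
    have heq : 1 / (2 * Real.sqrt ⟪deriv (deriv ξ) t, deriv (deriv ξ) t⟫) *
        (⟪deriv (deriv ξ) t, deriv (deriv (deriv ξ)) t⟫
          + ⟪deriv (deriv (deriv ξ)) t, deriv (deriv ξ) t⟫)
        = ⟪deriv (deriv (deriv ξ)) t, deriv (deriv ξ) t⟫ / k t := by
      rw [hsq, real_inner_comm (deriv (deriv ξ) t) (deriv (deriv (deriv ξ)) t)]
      field_simp
      ring
    rw [← heq, hkf]
    exact h
  have hrd' : ∀ t, deriv r t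
      = -(⟪deriv (deriv (deriv ξ)) t, deriv (deriv ξ) t⟫ / k t) / k t ^ 2 := by
    intro t
    have h1 := (hkd t).inv (hkne t)
    have hrf : r = fun s => (k s)⁻¹ := funext hr
    rw [hrf]
    exact h1.deriv
  -- N as a scaled second derivative
  have hNf : N = fun t => r t • deriv (deriv ξ) t := by
    funext t; rw [hN t, hr t]
  have hNd : ∀ t, HasDerivAt N
      (r t • deriv (deriv (deriv ξ)) t + deriv r t • deriv (deriv ξ) t) t := by
    intro t; rw [hNf]; exact (hrd t).smul (hJd t)
  have hNN : ∀ t, ⟪N t, N t⟫ = 1 := by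
    intro t
    rw [hNf]
    simp only [real_inner_smul_left, real_inner_smul_right]
    rw [hAA t, hr t]
    field_simp [hkne t]
    try ring
  have hTN : ∀ t, ⟪deriv ξ t, N t⟫ = 0 := by
    intro t
    rw [hNf]
    simp only [real_inner_smul_right]
    rw [real_inner_comm, hAT t]
    ring
  have hAkN : ∀ t, deriv (deriv ξ) t = k t • N t := by
    intro t
    rw [hNf]
    rw [smul_smul, hr t, mul_inv_cancel₀ (hkne t), one_smul]
  -- inner products of the third derivative with the frame
  have hJN : ∀ t, ⟪deriv (deriv (deriv ξ)) t, N t⟫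
      = r t * ⟪deriv (deriv (deriv ξ)) t, deriv (deriv ξ) t⟫ := by
    intro t
    rw [hNf]
    exact real_inner_smul_right _ _ _
  have hJB : ∀ t, ⟪deriv (deriv (deriv ξ)) t, B t⟫ = τ t * k t := by
    intro t
    have hdet : det3 (deriv ξ t) (deriv (deriv ξ) t) (deriv (deriv (deriv ξ)) t)
        = τ t * (k t) ^ 2 := by
      rw [hτ t, div_mul_cancel₀ _ (pow_ne_zero 2 (hkne t))]
    have hcross : cross3 (deriv ξ t) (N t)
        = r t • cross3 (deriv ξ t) (deriv (deriv ξ) t) := by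
      apply ext3; intro i
      rw [hNf]
      fin_cases i <;>
        simp [cross3_apply0, cross3_apply1, cross3_apply2, PiLp.smul_apply, smul_eq_mul] <;>
        ring
    rw [hB t, hcross, real_inner_smul_right, ← det3_eq_inner, hdet, hr t]
    field_simp [hkne t]
  have hJdec : ∀ t, deriv (deriv (deriv ξ)) t
      = (-(k t) ^ 2) • deriv ξ t
        + (r t * ⟪deriv (deriv (deriv ξ)) t, deriv (deriv ξ) t⟫) • N t
        + (τ t * k t) • B t := by
    intro t
    have h := decomp3 (deriv ξ t) (N t) (deriv (deriv (deriv ξ)) t) (hTT t) (hNN t) (hTN t)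
    rw [← hB t, hJT t, hJN t, hJB t] at h
    exact h
  -- Frenet: N' = -k T + τ B
  have hNd2 : ∀ t, HasDerivAt N ((-(k t)) • deriv ξ t + τ t • B t) t := by
    intro t
    have h := hNd t
    convert h using 1
    rw [hJdec t]
    set c := (⟪deriv (deriv (deriv ξ)) t, deriv (deriv ξ) t⟫ : ℝ) with hc
    rw [hAkN t]
    have hdr : deriv r t = -(c / k t) / k t ^ 2 := hrd' t
    rw [hdr, hr t]
    match_scalars <;> field_simp [hkne t] <;> ring
  -- Frenet: B' = -τ N
  have hBd : ∀ t, HasDerivAt B (-(τ t) • N t) t := by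
    intro t
    have hBfun : B = fun s => cross3 (deriv ξ s) (N s) := funext hB
    rw [hBfun]
    have h := hasDerivAt_cross3 (hAd t) (hNd2 t)
    convert h using 1
    have hTTc := hTT t
    have hTNc := hTN t
    rw [inner3] at hTTc hTNc
    apply ext3; intro i
    rw [hAkN t, hB t]
    fin_cases i <;>
      simp [cross3_apply0, cross3_apply1, cross3_apply2, PiLp.add_apply, PiLp.smul_apply,
        PiLp.neg_apply, smul_eq_mul] <;>
      first
        | ring1
        | linear_combination τ t * deriv ξ t 0 * hTNc - τ t * N t 0 * hTTc
        | linear_combination τ t * deriv ξ t 1 * hTNc - τ t * N t 1 * hTTc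
        | linear_combination τ t * deriv ξ t 2 * hTNc - τ t * N t 2 * hTTc
        | linear_combination (-(τ t * deriv ξ t 0)) * hTNc + τ t * N t 0 * hTTc
        | linear_combination (-(τ t * deriv ξ t 1)) * hTNc + τ t * N t 1 * hTTc
        | linear_combination (-(τ t * deriv ξ t 2)) * hTNc + τ t * N t 2 * hTTc
  -- derivative of the evolute
  have hE : ∀ t, HasDerivAt e (σ t • B t) t := by
    intro t
    have hef : e = fun s => ξ s + r s • N s + (deriv r s / τ s) • B s := funext he
    rw [hef]
    have h := ((hTd t).add ((hrd t).smul (hNd2 t))).add ((hfd t).smul (hBd t))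
    refine h.congr_deriv ?_
    rw [hσ t]
    match_scalars <;> (try simp only [hr t]) <;> (try field_simp [hkne t, hτne t]) <;> (try ring)
  have hconv : Convex ℝ I := convex_iff_ordConnected.mpr hI
  rcases I.eq_empty_or_nonempty with hIe | ⟨t0, ht0⟩
  · exact ⟨0, 0, by simp [hIe]⟩
  have hec : ∀ t ∈ I, e t = e t0 := by
    intro t ht
    have hle := hconv.norm_image_sub_le_of_norm_hasDerivWithin_le
      (f' := fun s => σ s • B s) (fun s hs => (hE s).hasDerivWithinAt)
      (C := 0) (fun s hs => by show ‖σ s • B s‖ ≤ 0; rw [hσ0 s hs]; simp) ht0 ht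
    rw [zero_mul] at hle
    have := le_antisymm hle (norm_nonneg _)
    rw [norm_eq_zero, sub_eq_zero] at this
    exact this
  have hTB : ∀ t, ⟪deriv ξ t, B t⟫ = 0 := by
    intro t; rw [hB t]; exact inner_cross3_left _ _
  have hxc : ∀ t, ξ t - e t = -(r t • N t + (deriv r t / τ t) • B t) := by
    intro t
    rw [he t]
    abel
  have hg : ∀ t ∈ I, HasDerivWithinAt (fun s => ⟪ξ s - e t0, ξ s - e t0⟫) 0 I t := by
    intro t ht
    have h1 : HasDerivAt (fun s => ξ s - e t0) (deriv ξ t) t := (hTd t).sub_const _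
    have h2 := h1.inner ℝ h1
    have h3 : ⟪deriv ξ t, ξ t - e t0⟫ = 0 := by
      rw [← hec t ht, hxc t, inner_neg_right, inner_add_right, real_inner_smul_right,
        real_inner_smul_right, hTN t, hTB t]
      ring
    have h4 : ⟪ξ t - e t0, deriv ξ t⟫ = 0 := by rw [real_inner_comm]; exact h3
    rw [h3, h4, add_zero] at h2
    exact h2.hasDerivWithinAt
  have hgc : ∀ t ∈ I, ⟪ξ t - e t0, ξ t - e t0⟫ = ⟪ξ t0 - e t0, ξ t0 - e t0⟫ := by
    intro t ht
    have hle := hconv.norm_image_sub_le_of_norm_hasDerivWithin_le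
      (f' := fun _ => (0 : ℝ)) (fun s hs => hg s hs) (C := 0) (fun s _ => by simp) ht0 ht
    rw [zero_mul] at hle
    have := le_antisymm hle (norm_nonneg _)
    rw [norm_eq_zero, sub_eq_zero] at this
    exact this
  have hnormc : ∀ t ∈ I, ‖ξ t - e t0‖ = ‖ξ t0 - e t0‖ := by
    intro t ht
    rw [norm_eq_sqrt_real_inner, norm_eq_sqrt_real_inner, hgc t ht]
  have hRt0 : R t0 = ‖ξ t0 - e t0‖ := by rw [hR t0, norm_sub_rev]
  refine ⟨e t0, R t0, hec, ?_, ?_⟩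
  · intro t ht
    rw [hR t, hec t ht, norm_sub_rev, hnormc t ht, ← hRt0]
  · intro t ht
    rw [hnormc t ht, ← hRt0]
end
end

section
/- If the curvature and torsion of ξ coincide, k(t) = τ(t) for all t, then σ = 1 + (r·r')' = 1 + (r²/2)''. Consequently σ ≡ 1 holds if and only if r² is an affine function of the arclength parameter, i.e. r(t)² = a·t + c for constants a, c. -/
open scoped RealInnerProductSpace

noncomputable section

theorem stmt_7
    (ξ : ℝ → EuclideanSpace ℝ (Fin 3))
    (hξ : ContDiff ℝ (⊤ : ℕ∞) ξ)
    (hunit : ∀ t, ‖deriv ξ t‖ = 1)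
    (k τ r : ℝ → ℝ) (N B : ℝ → EuclideanSpace ℝ (Fin 3))
    (hk : ∀ t, k t = ‖deriv (deriv ξ) t‖)
    (hkpos : ∀ t, 0 < k t)
    (hN : ∀ t, N t = (k t)⁻¹ • deriv (deriv ξ) t)
    (hB : ∀ t, B t = cross3 (deriv ξ t) (N t))
    (hτ : ∀ t, τ t = det3 (deriv ξ t) (deriv (deriv ξ) t) (deriv (deriv (deriv ξ)) t) / (k t) ^ 2)
    (hτne : ∀ t, τ t ≠ 0)
    (hr : ∀ t, r t = (k t)⁻¹)
    (σ : ℝ → ℝ)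
    (hσ : ∀ t, σ t = r t * τ t + deriv (fun s => deriv r s / τ s) t)
    (hkτ : ∀ t, k t = τ t) :
    (∀ t, σ t = 1 + deriv (fun s => r s * deriv r s) t) ∧
    (∀ t, σ t = 1 + deriv (deriv (fun s => r s ^ 2 / 2)) t) ∧
    ((∀ t, σ t = 1) ↔ ∃ a c : ℝ, ∀ t, r t ^ 2 = a * t + c) := by
  have hkne : ∀ t, k t ≠ 0 := fun t => (hkpos t).ne'
  -- r is smooth
  have hξ0 : ContDiff ℝ (⊤ : ℕ∞) ξ := hξ.of_le (by exact_mod_cast le_top)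
  have hξ' : ContDiff ℝ (⊤ : ℕ∞) (deriv ξ) := (contDiff_infty_iff_deriv.mp hξ0).2
  have hξ'' : ContDiff ℝ (⊤ : ℕ∞) (deriv (deriv ξ)) := (contDiff_infty_iff_deriv.mp hξ').2
  have hfne : ∀ t, deriv (deriv ξ) t ≠ 0 := by
    intro t h
    have h2 := hkpos t
    rw [hk t, h, norm_zero] at h2
    exact lt_irrefl 0 h2
  have hrc : ContDiff ℝ (⊤ : ℕ∞) r := by
    rw [contDiff_iff_contDiffAt]
    intro t
    have h1 : ContDiffAt ℝ (⊤ : ℕ∞) (fun s => ‖deriv (deriv ξ) s‖) t :=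
      hξ''.contDiffAt.norm ℝ (hfne t)
    have hkf : k = fun s => ‖deriv (deriv ξ) s‖ := funext hk
    have h2 : ContDiffAt ℝ (⊤ : ℕ∞) k t := by rw [hkf]; exact h1
    have h3 : ContDiffAt ℝ (⊤ : ℕ∞) (fun s => (k s)⁻¹) t := h2.inv (hkne t)
    have hrf : r = fun s => (k s)⁻¹ := funext hr
    rw [hrf]; exact h3
  have hrd : Differentiable ℝ r := hrc.differentiable (by simp)
  have hrd' : Differentiable ℝ (deriv r) :=
    ((contDiff_infty_iff_deriv.mp hrc).2).differentiable (by simp)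
  -- pointwise rewriting of σ
  have hfun : (fun s => deriv r s / τ s) = fun s => r s * deriv r s := by
    funext s
    rw [div_eq_mul_inv, ← hkτ s, ← hr s, mul_comm]
  have hone : ∀ t, r t * τ t = 1 := by
    intro t
    rw [hr t, ← hkτ t]
    exact inv_mul_cancel₀ (hkne t)
  have part1 : ∀ t, σ t = 1 + deriv (fun s => r s * deriv r s) t := by
    intro t
    rw [hσ t, hfun, hone t]
  -- deriv of r²/2
  have hg : deriv (fun s => r s ^ 2 / 2) = fun s => r s * deriv r s := by
    funext s
    have h := (((hrd s).hasDerivAt.pow 2).div_const 2).deriv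
    rw [show (fun s => r s ^ 2 / 2) = fun x => (r ^ 2) x / 2 from rfl, h]; norm_num <;> ring
  have part2 : ∀ t, σ t = 1 + deriv (deriv (fun s => r s ^ 2 / 2)) t := by
    intro t
    rw [part1 t, hg]
  refine ⟨part1, part2, ?_⟩
  constructor
  · intro h1
    have hF0 : ∀ t, deriv (fun s => r s * deriv r s) t = 0 := by
      intro t
      have := part1 t
      rw [h1 t] at this
      linarith
    have hFd : Differentiable ℝ (fun s => r s * deriv r s) := hrd.mul hrd'
    have hFconst : ∀ t, r t * deriv r t = r 0 * deriv r 0 := by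
      intro t
      exact is_const_of_deriv_eq_zero hFd hF0 t 0
    refine ⟨2 * (r 0 * deriv r 0), r 0 ^ 2, ?_⟩
    intro t
    have hGd : ∀ s, HasDerivAt (fun u => r u ^ 2 - 2 * (r 0 * deriv r 0) * u)
        (2 * r s ^ 1 * deriv r s - 2 * (r 0 * deriv r 0) * 1) s :=
      fun s => ((hrd s).hasDerivAt.pow 2).sub ((hasDerivAt_id s).const_mul _)
    have hGdiff : Differentiable ℝ (fun u => r u ^ 2 - 2 * (r 0 * deriv r 0) * u) :=
      fun s => (hGd s).differentiableAt
    have hG0 : ∀ s, deriv (fun u => r u ^ 2 - 2 * (r 0 * deriv r 0) * u) s = 0 := by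
      intro s
      rw [(hGd s).deriv, pow_one, mul_one]
      have := hFconst s
      ring_nf
      nlinarith [hFconst s]
    have := is_const_of_deriv_eq_zero hGdiff hG0 t 0
    simp only [mul_zero, sub_zero] at this
    linarith [this]
  · rintro ⟨a, c, hac⟩ t
    have hF : (fun s => r s * deriv r s) = fun _ => a / 2 := by
      funext s
      have heq : (fun u => r u ^ 2 / 2) = fun u => (a * u + c) / 2 := by
        funext u; rw [hac u]
      have hd : HasDerivAt (fun u => (a * u + c) / 2) (a * 1 / 2) s :=
        (((hasDerivAt_id s).const_mul a).add_const c).div_const 2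
      calc r s * deriv r s = deriv (fun u => r u ^ 2 / 2) s := by rw [hg]
        _ = a / 2 := by rw [heq, hd.deriv]; ring
    rw [part1 t, hF, deriv_const]
    ring
end
end
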